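/- arXiv:1704.07254 — 2 statements merged into one kernel-verified Lean document; each statement's English description precedes it below -/
import Mathlib

section
/- In any Union-Find tree t, the number of nodes of rank 0 is at least the number of nodes of positive rank. -/
open scoped Classical

/-- The raw data of a ranked tree: a node set `V`, a root, a parent map
(with `parent root = root` by convention) and a rank function. -/
structure PreTree (V : Type) where
  root : V
  parent : V → V
  rank : V → ℕ

namespace PreTree

variable {V W : Type}

/-- `Anc t x y` : `x` is a (weak) ancestor of `y` in `t`, i.e. `x = parent^[k] y`. -/
def Anc (t : PreTree V) (x y : V) : Prop := ∃ k : ℕ, t.parent^[k] y = x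

/-- `t` is a tree: the parent map fixes the root and every node reaches the root. -/
def IsTree (t : PreTree V) : Prop :=
  t.parent t.root = t.root ∧ ∀ x, t.Anc t.root x

/-- The rank strictly decreases from parent to child. -/
def RankDec (t : PreTree V) : Prop :=
  ∀ x, x ≠ t.root → t.rank x < t.rank (t.parent x)

/-- A ranked tree: a tree whose rank function strictly decreases towards the leaves. -/
def IsRanked (t : PreTree V) : Prop := t.IsTree ∧ t.RankDec

/-- `push t x y` : reattach `x` as a child of `y`, everything else unchanged. -/
noncomputable def push (t : PreTree V) (x y : V) : PreTree V :=
  ⟨t.root, Function.update t.parent x y, t.rank⟩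

/-- `x` and `y` are (distinct, non-root) siblings in `t`. -/
def Siblings (t : PreTree V) (x y : V) : Prop :=
  x ≠ y ∧ x ≠ t.root ∧ y ≠ t.root ∧ t.parent x = t.parent y

/-- One push step: `t ⊢ t'`. -/
def PushStep (t t' : PreTree V) : Prop :=
  ∃ x y, t.Siblings x y ∧ t.rank x < t.rank y ∧ t' = t.push x y

/-- Merge of two trees on disjoint node sets: attach `root s` below `root t`,
incrementing the rank of `root t` exactly when the two root ranks are equal. -/
noncomputable def merge (t : PreTree V) (s : PreTree W) : PreTree (V ⊕ W) where
  root := Sum.inl t.root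
  parent := fun z => match z with
    | Sum.inl v => Sum.inl (t.parent v)
    | Sum.inr w => if w = s.root then Sum.inl t.root else Sum.inr (s.parent w)
  rank := fun z => match z with
    | Sum.inl v =>
        if v = t.root ∧ t.rank t.root = s.rank s.root then t.rank v + 1 else t.rank v
    | Sum.inr w => s.rank w

/-- Collapse: reattach every non-root (weak) ancestor of `x` directly to the root. -/
noncomputable def collapse (t : PreTree V) (x : V) : PreTree V where
  root := t.root
  parent := fun y => if y ≠ t.root ∧ t.Anc y x then t.root else t.parent y
  rank := t.rank

/-- `s ⪯ t` : every ancestor relation of `s` also holds in `t`. -/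
def Le (s t : PreTree V) : Prop := ∀ x y, s.Anc x y → t.Anc x y

/-- Isomorphism of (pre)trees: a bijection preserving root, parent and rank. -/
structure Iso (t : PreTree V) (s : PreTree W) where
  toEquiv : V ≃ W
  map_root : toEquiv t.root = s.root
  map_parent : ∀ x, toEquiv (t.parent x) = s.parent (toEquiv x)
  map_rank : ∀ x, s.rank (toEquiv x) = t.rank x

theorem anc_parent_of_ne {t : PreTree V} {x y : V} (h : t.Anc x y) (hne : y ≠ x) :
    t.Anc x (t.parent y) := by
  obtain ⟨k, hk⟩ := h
  cases k with
  | zero => exact absurd hk hne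
  | succ n => exact ⟨n, by rw [← hk, Function.iterate_succ_apply]⟩

/-- The subtree of `t` rooted at `x`, on the node set of (weak) descendants of `x`. -/
noncomputable def subtree (t : PreTree V) (x : V) : PreTree {y : V // t.Anc x y} where
  root := ⟨x, ⟨0, rfl⟩⟩
  rank := fun y => t.rank y
  parent := fun y =>
    if h : (y : V) = x then ⟨x, ⟨0, rfl⟩⟩ else ⟨t.parent y, anc_parent_of_ne y.2 h⟩

/-- `DepthIs t x k` : the depth of `x` in `t` is exactly `k`. -/
def DepthIs (t : PreTree V) (x : V) (k : ℕ) : Prop :=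
  t.parent^[k] x = t.root ∧ ∀ j < k, t.parent^[j] x ≠ t.root

end PreTree

/-- Union trees: least class (up to isomorphism) containing singletons and closed
under `merge` of trees whose root ranks satisfy `rank t ≥ rank s`. -/
inductive IsUnion : {V : Type} → PreTree V → Prop
  | singleton {V : Type} (t : PreTree V)
      (h1 : ∀ x, x = t.root) (h2 : t.rank t.root = 0) : IsUnion t
  | merge {V W : Type} (t : PreTree V) (s : PreTree W)
      (ht : IsUnion t) (hs : IsUnion s) (hr : s.rank s.root ≤ t.rank t.root) :
      IsUnion (t.merge s)
  | iso {V W : Type} (t : PreTree V) (s : PreTree W)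
      (ht : IsUnion t) (hi : Nonempty (t.Iso s)) : IsUnion s

/-- Union-Find trees: least class (up to isomorphism) containing singletons and
closed under `merge` (with `rank t ≥ rank s`) and `collapse`. -/
inductive IsUnionFind : {V : Type} → PreTree V → Prop
  | singleton {V : Type} (t : PreTree V)
      (h1 : ∀ x, x = t.root) (h2 : t.rank t.root = 0) : IsUnionFind t
  | merge {V W : Type} (t : PreTree V) (s : PreTree W)
      (ht : IsUnionFind t) (hs : IsUnionFind s) (hr : s.rank s.root ≤ t.rank t.root) :
      IsUnionFind (t.merge s)
  | collapse {V : Type} (t : PreTree V) (x : V) (ht : IsUnionFind t) :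
      IsUnionFind (t.collapse x)
  | iso {V W : Type} (t : PreTree V) (s : PreTree W)
      (ht : IsUnionFind t) (hi : Nonempty (t.Iso s)) : IsUnionFind s

/-!
Count each node `+1` if its rank is `0` and `-1` otherwise. The total balance of a Union-Find
tree is nonnegative, and positive when the root has rank `0`. Collapse changes no rank. Merge adds
the two balances and changes only the rank of the new root; this costs `2` exactly when two roots of
rank `0` are merged, and then each of the two trees had balance at least `1`.
-/

namespace PreTree

variable {V W : Type}

def rankSign (n : ℕ) : ℤ := if n = 0 then 1 else -1

theorem rankSign_zero : rankSign 0 = 1 := rfl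

theorem rankSign_of_pos {n : ℕ} (hn : 0 < n) : rankSign n = -1 := if_neg hn.ne'

def rankBalance [Fintype V] (t : PreTree V) : ℤ :=
  ∑ x, rankSign (t.rank x)

theorem rankBalance_eq [Fintype V] (t : PreTree V) :
    t.rankBalance = Fintype.card {x // t.rank x = 0} - Fintype.card {x // 0 < t.rank x} := by
  simp only [rankBalance, rankSign, Finset.sum_ite, Finset.sum_const, Fintype.card_subtype,
    Nat.pos_iff_ne_zero, smul_neg, nsmul_eq_mul, mul_one, sub_eq_add_neg]

theorem Iso.rankBalance_eq [Fintype V] [Fintype W] {t : PreTree V} {s : PreTree W}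
    (e : t.Iso s) : s.rankBalance = t.rankBalance := by
  simp only [rankBalance, ← e.toEquiv.sum_comp, e.map_rank]

theorem Iso.rank_root_eq {t : PreTree V} {s : PreTree W} (e : t.Iso s) :
    s.rank s.root = t.rank t.root := by
  rw [← e.map_root, e.map_rank]

theorem merge_root (t : PreTree V) (s : PreTree W) : (t.merge s).root = .inl t.root := rfl

theorem merge_rank_inl_of_ne {t : PreTree V} {s : PreTree W} {v : V} (hv : v ≠ t.root) :
    (t.merge s).rank (.inl v) = t.rank v := by
  simp [merge, hv]

theorem merge_rank_inr (t : PreTree V) (s : PreTree W) (w : W) :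
    (t.merge s).rank (.inr w) = s.rank w := rfl

theorem merge_rank_root (t : PreTree V) (s : PreTree W) :
    (t.merge s).rank (t.merge s).root =
      if t.rank t.root = s.rank s.root then t.rank t.root + 1 else t.rank t.root := by
  simp [merge]

theorem rankBalance_merge [Fintype V] [Fintype W] (t : PreTree V) (s : PreTree W) :
    (t.merge s).rankBalance + rankSign (t.rank t.root) =
      t.rankBalance + s.rankBalance + rankSign ((t.merge s).rank (t.merge s).root) := by
  have hrest : ∑ v ∈ {t.root}ᶜ, rankSign ((t.merge s).rank (.inl v)) =
      ∑ v ∈ {t.root}ᶜ, rankSign (t.rank v) :=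
    Finset.sum_congr rfl fun v hv => by
      rw [merge_rank_inl_of_ne (by simpa using hv)]
  simp only [rankBalance, Fintype.sum_sum_type, merge_rank_inr,
    Fintype.sum_eq_add_sum_compl t.root, hrest]
  rw [merge_root]
  ring

theorem merge_rank_root_pos {t : PreTree V} {s : PreTree W} (h : s.rank s.root ≤ t.rank t.root) :
    0 < (t.merge s).rank (t.merge s).root := by
  rw [merge_rank_root]
  split_ifs with heq <;> omega

end PreTree

open PreTree

theorem IsUnionFind.rankBalance_bounds {V : Type} {t : PreTree V} (hu : IsUnionFind t)
    [Fintype V] : 0 ≤ t.rankBalance ∧ (t.rank t.root = 0 → 1 ≤ t.rankBalance) := by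
  revert ‹Fintype V›
  induction hu with
  | @singleton V t hroot hrank =>
    intro _
    have hcard : t.rankBalance = Fintype.card V := by
      simp [rankBalance, fun x => hroot x ▸ hrank, rankSign_zero]
    have : 0 < Fintype.card V := Fintype.card_pos_iff.2 ⟨t.root⟩
    omega
  | @merge V W t s _ _ hr iht ihs =>
    intro inst
    have : Fintype V := .ofInjective _ (Sum.inl_injective (β := W))
    have : Fintype W := .ofInjective _ (Sum.inr_injective (α := V))
    obtain rfl : inst = instFintypeSum V W := Subsingleton.elim _ _
    have hmerge := rankBalance_merge t s
    have hpos := merge_rank_root_pos hr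
    refine ⟨?_, by omega⟩
    rw [rankSign_of_pos hpos] at hmerge
    rcases Nat.eq_zero_or_pos (t.rank t.root) with h0 | h0
    · rw [h0, rankSign_zero] at hmerge
      have := iht.2 h0
      have := ihs.2 (by omega)
      omega
    · rw [rankSign_of_pos h0] at hmerge
      have := iht.1
      have := ihs.1
      omega
  | collapse t x _ ih => exact ih
  | @iso V W t s _ hi ih =>
    intro _
    obtain ⟨e⟩ := hi
    have : Fintype V := .ofEquiv _ e.toEquiv.symm
    rw [e.rankBalance_eq, e.rank_root_eq]
    exact ih

/-- a Union-Find tree has at least as many rank-0 nodes as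
positive-rank nodes. -/
theorem isUnionFind_rank_zero_ge {V : Type} [Fintype V] (t : PreTree V)
    (hu : IsUnionFind t) :
    Fintype.card {x : V // 0 < t.rank x} ≤ Fintype.card {x : V // t.rank x = 0} := by
  have h := hu.rankBalance_bounds.1
  rw [rankBalance_eq] at h
  omega
end

section
/- If t = collapse(t', x) for a ranked tree t' and a node x, then t ⊢* t', i.e., t' is obtainable from t by a sequence of push operations. -/
/-!
Collapsing at `x` reattaches the non-root ancestors of `x` to the root. Undo this one node at a
time, always choosing a reattached node `y` of least rank: its children were not reattached, so
pushing `y` below its old parent (reattached too, unless it is the root, when nothing is to be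
done) is a legal push, as ranks increase towards the root.
-/

open scoped Classical

open PreTree

open Relation

namespace PreTree

variable {V : Type}

noncomputable def reattachToRoot (t : PreTree V) (S : Set V) : PreTree V :=
  ⟨t.root, fun y => if y ∈ S then t.root else t.parent y, t.rank⟩

theorem reattachToRoot_empty (t : PreTree V) : t.reattachToRoot ∅ = t := by
  simp [reattachToRoot]

theorem reattachToRoot_insert_of_parent_eq_root (t : PreTree V) {S : Set V} {y : V}
    (hpy : t.parent y = t.root) : t.reattachToRoot (insert y S) = t.reattachToRoot S := by
  simp only [reattachToRoot, PreTree.mk.injEq, true_and, and_true]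
  funext z
  by_cases hz : z = y <;> simp_all

theorem pushStep_reattachToRoot_insert {t : PreTree V} (hrank : t.RankDec) {S : Set V} {y : V}
    (hyS : y ∉ S) (hy : y ≠ t.root) (hpy : t.parent y ≠ t.root) (hpyS : t.parent y ∈ S) :
    PushStep (t.reattachToRoot (insert y S)) (t.reattachToRoot S) := by
  have hlt : t.rank y < t.rank (t.parent y) := hrank y hy
  have hne : y ≠ t.parent y := fun h => hlt.ne (congrArg t.rank h)
  refine ⟨y, t.parent y, ⟨hne, hy, hpy, ?_⟩, hlt, ?_⟩
  · simp [reattachToRoot, hpyS]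
  · simp only [push, reattachToRoot, PreTree.mk.injEq, true_and, and_true]
    funext z
    by_cases hz : z = y
    · subst hz; simp [hyS]
    · simp [hz]

theorem reattachToRoot_pushes_back {t : PreTree V} (hrank : t.RankDec) {S : Set V}
    (hS : S.Finite) (hroot : t.root ∉ S)
    (hclosed : ∀ y ∈ S, t.parent y ≠ t.root → t.parent y ∈ S) :
    ReflTransGen PushStep (t.reattachToRoot S) t := by
  obtain ⟨F, rfl⟩ := hS.exists_finset_coe
  induction F using Finset.induction_on_min_value t.rank with
  | empty => rw [Finset.coe_empty, reattachToRoot_empty]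
  | insert y F hyF hmin ih =>
    rw [Finset.coe_insert] at hroot hclosed ⊢
    have hy : y ≠ t.root := fun h => hroot (h ▸ Set.mem_insert y _)
    -- a child `z ∈ F` of `y` would have smaller rank than the minimum `y`
    have hclosedF : ∀ z ∈ (F : Set V), t.parent z ≠ t.root → t.parent z ∈ (F : Set V) := by
      intro z hz hpz
      have hzr : z ≠ t.root := fun h => hroot (h ▸ Set.mem_insert_of_mem y hz)
      refine (hclosed z (Set.mem_insert_of_mem y hz) hpz).resolve_left fun hzy => ?_
      exact (hrank z hzr).not_ge (hzy ▸ hmin z hz)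
    have ihF := ih F.finite_toSet (fun h => hroot (Set.mem_insert_of_mem y h)) hclosedF
    by_cases hpy : t.parent y = t.root
    · rwa [reattachToRoot_insert_of_parent_eq_root t hpy]
    · have hpyF := (hclosed y (Set.mem_insert y _) hpy).resolve_left
        fun h => (hrank y hy).ne' (congrArg t.rank h)
      exact .head (pushStep_reattachToRoot_insert hrank (by simpa using hyF) hy hpy hpyF) ihF

theorem finite_setOf_anc {t : PreTree V} (ht : t.IsTree) (x : V) : {y | t.Anc y x}.Finite := by
  obtain ⟨m, hm⟩ := ht.2 x
  refine ((Set.finite_Iic m).image fun k => t.parent^[k] x).subset ?_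
  rintro y ⟨k, rfl⟩
  rcases le_or_gt k m with hk | hk
  · exact ⟨k, hk, rfl⟩
  · refine ⟨m, Set.mem_Iic.2 le_rfl, ?_⟩
    dsimp only
    rw [hm, ← Nat.sub_add_cancel hk.le, Function.iterate_add_apply, hm,
      Function.iterate_fixed ht.1]

theorem anc_parent {t : PreTree V} {y x : V} (h : t.Anc y x) : t.Anc (t.parent y) x := by
  obtain ⟨k, rfl⟩ := h
  exact ⟨k + 1, Function.iterate_succ_apply' _ _ _⟩

theorem collapse_eq_reattachToRoot (t : PreTree V) (x : V) :
    t.collapse x = t.reattachToRoot {y | y ≠ t.root ∧ t.Anc y x} := by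
  simp only [collapse, reattachToRoot, PreTree.mk.injEq, true_and, and_true]
  funext y
  split_ifs <;> simp_all

end PreTree

/-- a ranked tree is obtainable from its collapse at any node by a
finite sequence of pushes. -/
theorem collapse_pushes_back {V : Type} (t : PreTree V) (ht : t.IsRanked) (x : V) :
    Relation.ReflTransGen PreTree.PushStep (t.collapse x) t := by
  rw [collapse_eq_reattachToRoot]
  refine reattachToRoot_pushes_back ht.2 ((finite_setOf_anc ht.1 x).subset fun _ h => h.2)
    (fun h => h.1 rfl) ?_
  rintro y ⟨-, hy⟩ hpy
  exact ⟨hpy, anc_parent hy⟩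
end
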